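/- For g ≥ 2 even, the ideal J_g^- of ℂ[α,γ] is generated by ζ_g^- together with γ·J_{g−2}^-. Moreover, for every i ≥ 0 one has γ^i ζ_{g−2i}^- ∈ J_g^-. -/
import Mathlib


open MvPolynomial

/-- ζ_k^- ∈ ℂ[α,γ] (variables: X 0 = α, X 1 = γ):
    ζ_{k+1}^- = α ζ_k^- + 2k(k−1) γ ζ_{k−2}^- for k even, and
    ζ_{k+1}^- = α ζ_k^- − 16k² ζ_{k−1}^- + 2k(k−1) γ ζ_{k−2}^- for k odd. -/
noncomputable def zm : ℕ → MvPolynomial (Fin 2) ℂ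
  | 0 => 1
  | 1 => X 0
  | 2 => X 0 * zm 1 - C 16 * zm 0
  | (n + 3) =>
      if n % 2 = 0 then
        X 0 * zm (n + 2) + C (2 * ((n : ℂ) + 2) * ((n : ℂ) + 1)) * X 1 * zm n
      else
        X 0 * zm (n + 2) - C (16 * ((n : ℂ) + 2) ^ 2) * zm (n + 1)
          + C (2 * ((n : ℂ) + 2) * ((n : ℂ) + 1)) * X 1 * zm n

/-- ζ_k^- for an integer index k, with ζ_k^- = 0 for k < 0. -/
noncomputable def zmZ (k : ℤ) : MvPolynomial (Fin 2) ℂ :=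
  if k < 0 then 0 else zm k.toNat

/-- J_g^- = (ζ_g^-, ζ_{g+1}^-, ζ_{g+2}^-) ⊆ ℂ[α,γ]. -/
noncomputable def Jm (g : ℕ) : Ideal (MvPolynomial (Fin 2) ℂ) :=
  Ideal.span {zm g, zm (g + 1), zm (g + 2)}

lemma zm_rec_even (n : ℕ) (hn : n % 2 = 0) :
    zm (n + 3) = X 0 * zm (n + 2) + C (2 * ((n : ℂ) + 2) * ((n : ℂ) + 1)) * X 1 * zm n := by
  rw [zm, if_pos hn]

lemma zm_rec_odd (n : ℕ) (hn : n % 2 = 1) :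
    zm (n + 3) = X 0 * zm (n + 2) - C (16 * ((n : ℂ) + 2) ^ 2) * zm (n + 1)
      + C (2 * ((n : ℂ) + 2) * ((n : ℂ) + 1)) * X 1 * zm n := by
  rw [zm, if_neg (by omega)]

lemma cne (n : ℕ) : (2 * ((n : ℂ) + 2) * ((n : ℂ) + 1)) ≠ 0 := by
  have h1 : ((n : ℂ) + 2) ≠ 0 := by exact_mod_cast Nat.succ_ne_zero (n + 1)
  have h2 : ((n : ℂ) + 1) ≠ 0 := by exact_mod_cast Nat.succ_ne_zero n
  exact mul_ne_zero (mul_ne_zero two_ne_zero h1) h2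

lemma cunit (n : ℕ) : IsUnit (C (2 * ((n : ℂ) + 2) * ((n : ℂ) + 1)) : MvPolynomial (Fin 2) ℂ) :=
  (isUnit_iff_ne_zero.mpr (cne n)).map (C : ℂ →+* MvPolynomial (Fin 2) ℂ)

lemma mem0 (g : ℕ) : zm g ∈ Jm g := Ideal.subset_span (by simp)
lemma mem1 (g : ℕ) : zm (g + 1) ∈ Jm g := Ideal.subset_span (by simp)
lemma mem2 (g : ℕ) : zm (g + 2) ∈ Jm g := Ideal.subset_span (by simp)

lemma key (g : ℕ) (he : Even g) :
    ∀ i t, g = t + 2 * i →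
      (X 1 : MvPolynomial (Fin 2) ℂ) ^ i * zm t ∈ Jm g ∧
      (X 1 : MvPolynomial (Fin 2) ℂ) ^ i * zm (t + 1) ∈ Jm g ∧
      (X 1 : MvPolynomial (Fin 2) ℂ) ^ i * zm (t + 2) ∈ Jm g := by
  intro i
  induction i with
  | zero =>
    intro t ht
    have ht' : t = g := by omega
    subst ht'
    simpa using ⟨mem0 _, mem1 _, mem2 _⟩
  | succ i ih =>
    intro t ht
    obtain ⟨h1, h2, h3⟩ := ih (t + 2) (by omega)
    rw [show t + 2 + 1 = t + 3 from by omega] at h2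
    rw [show t + 2 + 2 = t + 4 from by omega] at h3
    have hte : t % 2 = 0 := by obtain ⟨r, hr⟩ := he; omega
    have E1 := zm_rec_even t hte
    have E2 := zm_rec_odd (t + 1) (by omega)
    rw [show t + 1 + 3 = t + 4 from by omega, show t + 1 + 2 = t + 3 from by omega,
      show t + 1 + 1 = t + 2 from by omega] at E2
    refine ⟨?_, ?_, ?_⟩
    · rw [← Ideal.unit_mul_mem_iff_mem _ (cunit t)]
      have e : (C (2 * ((t : ℂ) + 2) * ((t : ℂ) + 1)) : MvPolynomial (Fin 2) ℂ) *
          ((X 1 : MvPolynomial (Fin 2) ℂ) ^ (i + 1) * zm t)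
          = (X 1) ^ i * zm (t + 3) - X 0 * ((X 1) ^ i * zm (t + 2)) := by
        linear_combination (-(X 1 : MvPolynomial (Fin 2) ℂ) ^ i) * E1
      rw [e]
      exact sub_mem h2 (Ideal.mul_mem_left _ _ h1)
    · rw [← Ideal.unit_mul_mem_iff_mem _ (cunit (t + 1))]
      have e2 : (C (2 * ((((t + 1 : ℕ)) : ℂ) + 2) * ((((t + 1 : ℕ)) : ℂ) + 1)) : MvPolynomial (Fin 2) ℂ) *
          ((X 1 : MvPolynomial (Fin 2) ℂ) ^ (i + 1) * zm (t + 1))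
          = (X 1) ^ i * zm (t + 4) - X 0 * ((X 1) ^ i * zm (t + 3))
            + C (16 * (((t + 1 : ℕ) : ℂ) + 2) ^ 2) * ((X 1) ^ i * zm (t + 2)) := by
        linear_combination (-(X 1 : MvPolynomial (Fin 2) ℂ) ^ i) * E2
      rw [e2]
      exact add_mem (sub_mem h3 (Ideal.mul_mem_left _ _ h2)) (Ideal.mul_mem_left _ _ h1)
    · rw [show (X 1 : MvPolynomial (Fin 2) ℂ) ^ (i + 1) * zm (t + 2)
        = X 1 * ((X 1) ^ i * zm (t + 2)) from by ring]
      exact Ideal.mul_mem_left _ _ h1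

lemma zmZ_ofNat (n : ℕ) : zmZ (n : ℤ) = zm n := by simp [zmZ]


/-- For g ≥ 2 even, J_g^- is generated by ζ_g^- together with γ·J_{g−2}^-, and
    γ^i ζ_{g−2i}^- ∈ J_g^- for every i ≥ 0. -/
theorem Jm_even_structure (g : ℕ) (hg : 2 ≤ g) (heven : Even g) :
    Jm g = Ideal.span {zm g} ⊔ Ideal.span {(X 1 : MvPolynomial (Fin 2) ℂ)} * Jm (g - 2) ∧
    ∀ i : ℕ, (X 1 : MvPolynomial (Fin 2) ℂ) ^ i * zmZ ((g : ℤ) - 2 * i) ∈ Jm g := by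
  obtain ⟨n, rfl⟩ : ∃ n, g = n + 2 := ⟨g - 2, by omega⟩
  rw [show n + 2 - 2 = n from by omega]
  have hne : n % 2 = 0 := by obtain ⟨r, hr⟩ := heven; omega
  have E1 := zm_rec_even n hne
  have E2 := zm_rec_odd (n + 1) (by omega)
  rw [show n + 1 + 3 = n + 4 from by omega, show n + 1 + 2 = n + 3 from by omega,
    show n + 1 + 1 = n + 2 from by omega] at E2
  obtain ⟨k1, k2, k3⟩ := key (n + 2) heven 1 n (by omega)
  rw [pow_one] at k1 k2 k3
  constructor
  · apply le_antisymm
    · rw [Jm, show n + 2 + 1 = n + 3 from by omega, show n + 2 + 2 = n + 4 from by omega,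
        Ideal.span_le]
      have hg2 : zm (n + 2) ∈ Ideal.span {zm (n + 2)} ⊔
          Ideal.span {(X 1 : MvPolynomial (Fin 2) ℂ)} * Jm n :=
        Ideal.mem_sup_left (Ideal.mem_span_singleton_self _)
      have hg3 : zm (n + 3) ∈ Ideal.span {zm (n + 2)} ⊔
          Ideal.span {(X 1 : MvPolynomial (Fin 2) ℂ)} * Jm n := by
        rw [E1]
        refine add_mem (Ideal.mul_mem_left _ _ hg2) ?_
        rw [mul_assoc]
        exact Ideal.mem_sup_right (Ideal.mul_mem_left _ _
          (Ideal.mul_mem_mul (Ideal.mem_span_singleton_self _) (mem0 n)))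
      have hg4 : zm (n + 4) ∈ Ideal.span {zm (n + 2)} ⊔
          Ideal.span {(X 1 : MvPolynomial (Fin 2) ℂ)} * Jm n := by
        rw [E2]
        refine add_mem (sub_mem (Ideal.mul_mem_left _ _ hg3) (Ideal.mul_mem_left _ _ hg2)) ?_
        rw [mul_assoc]
        exact Ideal.mem_sup_right (Ideal.mul_mem_left _ _
          (Ideal.mul_mem_mul (Ideal.mem_span_singleton_self _) (mem1 n)))
      intro p hp
      simp only [Set.mem_insert_iff, Set.mem_singleton_iff] at hp
      rcases hp with rfl | rfl | rfl
      · exact hg2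
      · exact hg3
      · exact hg4
    · apply sup_le
      · rw [Ideal.span_le, Set.singleton_subset_iff]
        exact mem0 (n + 2)
      · rw [Ideal.mul_le]
        intro r hr s hs
        obtain ⟨d, rfl⟩ := Ideal.mem_span_singleton.mp hr
        have hx : (X 1 : MvPolynomial (Fin 2) ℂ) * s ∈ Jm (n + 2) := by
          refine Submodule.span_induction ?_ ?_ ?_ ?_ hs
          · intro p hp
            simp only [Set.mem_insert_iff, Set.mem_singleton_iff] at hp
            rcases hp with rfl | rfl | rfl
            · exact k1
            · exact k2
            · exact k3
          · simp
          · intro a b _ _ ha hb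
            rw [mul_add]; exact add_mem ha hb
          · intro a b _ hb
            rw [smul_eq_mul, show (X 1 : MvPolynomial (Fin 2) ℂ) * (a * b) = a * (X 1 * b)
              from by ring]
            exact Ideal.mul_mem_left _ _ hb
        rw [show (X 1 : MvPolynomial (Fin 2) ℂ) * d * s = d * (X 1 * s) from by ring]
        exact Ideal.mul_mem_left _ _ hx
  · intro i
    by_cases hle : 2 * i ≤ n + 2
    · have hcast : ((n + 2 : ℕ) : ℤ) - 2 * (i : ℤ) = ((n + 2 - 2 * i : ℕ) : ℤ) := by
        push_cast; omega
      rw [hcast, zmZ_ofNat]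
      exact (key (n + 2) heven i (n + 2 - 2 * i) (by omega)).1
    · have hneg : ((n + 2 : ℕ) : ℤ) - 2 * (i : ℤ) < 0 := by push_cast; omega
      rw [zmZ, if_pos hneg, mul_zero]
      exact zero_mem _
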